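/- Every prelinear cancellative residuated lattice has a distributive lattice reduct. -/

import Mathlib

/-!
Put `u = b \ c ⊓ 1` and `v = c \ b ⊓ 1`, so that `u ⊔ v = 1` by prelinearity, and let
`x = a ⊓ (b ⊔ c)`. Multiplication distributes over joins, so `x = x * u ⊔ x * v`. Since `u ≤ 1`
and `b * (b \ c) ≤ c`, we get `x * u ≤ a ⊓ c`; symmetrically `x * v ≤ a ⊓ b`.
-/

/-- A residuated lattice: a lattice-ordered monoid with left and right residuals. -/
class ResiduatedLattice (α : Type*) extends Lattice α, Monoid α where
  /-- `ldiv a c` is `a \ c`. -/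
  ldiv : α → α → α
  /-- `rdiv c b` is `c / b`. -/
  rdiv : α → α → α
  mul_le_iff_le_rdiv : ∀ a b c : α, a * b ≤ c ↔ a ≤ rdiv c b
  mul_le_iff_le_ldiv : ∀ a b c : α, a * b ≤ c ↔ b ≤ ldiv a c

open ResiduatedLattice

namespace ResiduatedLattice

variable {α : Type*} [ResiduatedLattice α]

instance : MulLeftMono α where
  elim _ _ _ h := (mul_le_iff_le_ldiv _ _ _).mpr <| h.trans <| (mul_le_iff_le_ldiv _ _ _).mp le_rfl

instance : MulRightMono α where
  elim _ _ _ h := (mul_le_iff_le_rdiv _ _ _).mpr <| h.trans <| (mul_le_iff_le_rdiv _ _ _).mp le_rfl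

theorem mul_ldiv_le (x y : α) : x * ldiv x y ≤ y :=
  (mul_le_iff_le_ldiv _ _ _).mpr le_rfl

theorem mul_sup_le_iff {x y z w : α} : x * (y ⊔ z) ≤ w ↔ x * y ≤ w ∧ x * z ≤ w := by
  simp only [mul_le_iff_le_ldiv x, sup_le_iff]

theorem sup_mul_le_iff {x y z w : α} : (x ⊔ y) * z ≤ w ↔ x * z ≤ w ∧ y * z ≤ w := by
  simp only [mul_le_iff_le_rdiv _ z, sup_le_iff]

theorem sup_mul_ldiv_inf_one_le (b c : α) : (b ⊔ c) * (ldiv b c ⊓ 1) ≤ c :=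
  sup_mul_le_iff.mpr
    ⟨(mul_le_mul_right inf_le_left b).trans (mul_ldiv_le b c),
      mul_le_of_le_one_right' inf_le_right⟩

theorem inf_sup_mul_ldiv_inf_one_le (a b c : α) :
    (a ⊓ (b ⊔ c)) * (ldiv b c ⊓ 1) ≤ a ⊓ c :=
  le_inf ((mul_le_of_le_one_right' inf_le_right).trans inf_le_left)
    ((mul_le_mul_left inf_le_right _).trans (sup_mul_ldiv_inf_one_le b c))

theorem inf_sup_le_of_ldiv_prelinear {a b c : α}
    (h : (ldiv b c ⊓ 1) ⊔ (ldiv c b ⊓ 1) = 1) :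
    a ⊓ (b ⊔ c) ≤ (a ⊓ b) ⊔ (a ⊓ c) := by
  have hu := inf_sup_mul_ldiv_inf_one_le a b c
  have hv := inf_sup_mul_ldiv_inf_one_le a c b
  rw [sup_comm c b] at hv
  calc a ⊓ (b ⊔ c)
      _ = (a ⊓ (b ⊔ c)) * ((ldiv b c ⊓ 1) ⊔ (ldiv c b ⊓ 1)) := by rw [h, mul_one]
      _ ≤ (a ⊓ b) ⊔ (a ⊓ c) :=
        mul_sup_le_iff.mpr ⟨hu.trans le_sup_right, hv.trans le_sup_left⟩

end ResiduatedLattice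

theorem prelinear_cancellative_distributive_general {α : Type*} [ResiduatedLattice α]
    (hLPL : ∀ x y : α, (ldiv x y ⊓ 1) ⊔ (ldiv y x ⊓ 1) = 1) (a b c : α) :
    a ⊓ (b ⊔ c) = (a ⊓ b) ⊔ (a ⊓ c) :=
  le_antisymm (inf_sup_le_of_ldiv_prelinear (hLPL b c)) le_inf_sup

theorem prelinear_cancellative_distributive {α : Type*} [ResiduatedLattice α]
    (hLPL : ∀ x y : α, (ldiv x y ⊓ 1) ⊔ (ldiv y x ⊓ 1) = 1)
    (hRPL : ∀ x y : α, (rdiv x y ⊓ 1) ⊔ (rdiv y x ⊓ 1) = 1)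
    (hcanc : ∀ x y : α, rdiv (x * y) y = x ∧ ldiv y (y * x) = x) (a b c : α) :
    a ⊓ (b ⊔ c) = (a ⊓ b) ⊔ (a ⊓ c) :=
  prelinear_cancellative_distributive_general hLPL a b c
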